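/- arXiv:1001.2511 — 5 statements merged into one kernel-verified Lean document; each statement's English description precedes it below -/
import Mathlib

section
/- If p and 2p-1 are both odd primes and n = 2(2p-1), then φ(n) = φ(n+2). -/
namespace Nat

theorem totient_four_mul_of_odd {m : ℕ} (hm : Odd m) : (4 * m).totient = 2 * m.totient := by
  rw [show 4 * m = 2 * (2 * m) by ring, totient_two_mul_of_even (even_two_mul m),
    totient_two_mul_of_odd hm]

end Nat

theorem stmt_0 (p n : ℕ) (hp : p.Prime) (hpo : Odd p)
    (hq : Nat.Prime (2 * p - 1)) (hqo : Odd (2 * p - 1))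
    (hn : n = 2 * (2 * p - 1)) :
    Nat.totient n = Nat.totient (n + 2) := by
  have hp1 : 1 ≤ p := hp.one_lt.le
  have hn2 : n + 2 = 4 * p := by omega
  rw [hn2, Nat.totient_four_mul_of_odd hpo, Nat.totient_prime hp, hn,
    Nat.totient_two_mul_of_odd hqo, Nat.totient_prime hq]
  omega
end

section
/- Let j, k, g, r be positive integers with g = gcd(j, j+k), and suppose j and j+k have the same set of prime factors. If p = jr/g + 1 and q = (j+k)r/g + 1 are both primes not dividing j, and n = j·((j+k)r/g + 1), then φ(n) = φ(n+k). -/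
/-! Write `g = gcd(j, j+k)`, `a = j/g`, `b = (j+k)/g`, so that `p = ar + 1` and `q = br + 1`.
Since `jb = (j+k)a`, we get `n + k = (j+k)p`, and the prime hypotheses make both products
coprime, so `φ(n) = φ(j)·br` and `φ(n+k) = φ(j+k)·ar`. Finally `φ(m)/m` only depends on the
prime factors of `m`, so `φ(j)/j = φ(j+k)/(j+k)`, i.e. `φ(j)·b = φ(j+k)·a`. -/

namespace Nat

theorem totient_mul_eq_of_primeFactors_eq {m n : ℕ} (h : m.primeFactors = n.primeFactors) :
    φ m * n = φ n * m := by
  have hm := totient_mul_prod_primeFactors m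
  have hn := totient_mul_prod_primeFactors n
  rw [← h] at hn
  have hP : 0 < ∏ p ∈ m.primeFactors, p :=
    Finset.prod_pos fun p hp => (prime_of_mem_primeFactors hp).pos
  refine Nat.eq_of_mul_eq_mul_right hP ?_
  calc φ m * n * ∏ p ∈ m.primeFactors, p = n * (φ m * ∏ p ∈ m.primeFactors, p) := by ring
    _ = m * (φ n * ∏ p ∈ m.primeFactors, p) := by rw [hm, hn]; ring
    _ = φ n * m * ∏ p ∈ m.primeFactors, p := by ring

theorem totient_mul_div_gcd_eq_of_primeFactors_eq {m n : ℕ}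
    (h : m.primeFactors = n.primeFactors) :
    φ m * (n / gcd m n) = φ n * (m / gcd m n) := by
  rcases Nat.eq_zero_or_pos (gcd m n) with hg | hg
  · simp [hg]
  refine Nat.eq_of_mul_eq_mul_right hg ?_
  rw [mul_assoc, Nat.div_mul_cancel (gcd_dvd_right m n), mul_assoc,
    Nat.div_mul_cancel (gcd_dvd_left m n)]
  exact totient_mul_eq_of_primeFactors_eq h

theorem not_dvd_of_primeFactors_eq {m n p : ℕ} (h : m.primeFactors = n.primeFactors)
    (hp : p.Prime) (hn : n ≠ 0) (hpm : ¬ p ∣ m) : ¬ p ∣ n :=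
  fun hpn => hpm (dvd_of_mem_primeFactors (h ▸ mem_primeFactors.2 ⟨hp, hpn, hn⟩))

theorem totient_mul_prime_of_not_dvd {m p : ℕ} (hp : p.Prime) (h : ¬ p ∣ m) :
    φ (m * p) = φ m * (p - 1) := by
  rw [mul_comm, totient_mul_of_prime_of_not_dvd hp h, mul_comm]

theorem mul_div_gcd_add_one_add (j k r : ℕ) :
    j * ((j + k) * r / gcd j (j + k) + 1) + k = (j + k) * (j * r / gcd j (j + k) + 1) := by
  have hjk : j * ((j + k) / gcd j (j + k)) = (j + k) * (j / gcd j (j + k)) := by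
    rw [← Nat.mul_div_assoc _ (gcd_dvd_right j (j + k)),
      ← Nat.mul_div_assoc _ (gcd_dvd_left j (j + k)), mul_comm]
  rw [Nat.mul_div_right_comm (gcd_dvd_right j (j + k)),
    Nat.mul_div_right_comm (gcd_dvd_left j (j + k))]
  calc j * ((j + k) / gcd j (j + k) * r + 1) + k
      = j * ((j + k) / gcd j (j + k)) * r + (j + k) := by ring
    _ = (j + k) * (j / gcd j (j + k) * r + 1) := by rw [hjk]; ring

end Nat

theorem stmt_2_general (j k g r n : ℕ) (hj : 0 < j)
    (hg : g = Nat.gcd j (j + k))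
    (hsame : j.primeFactors = (j + k).primeFactors)
    (hp : Nat.Prime (j * r / g + 1)) (hq : Nat.Prime ((j + k) * r / g + 1))
    (hpj : ¬ (j * r / g + 1) ∣ j) (hqj : ¬ ((j + k) * r / g + 1) ∣ j)
    (hn : n = j * ((j + k) * r / g + 1)) :
    Nat.totient n = Nat.totient (n + k) := by
  subst hg hn
  have hpjk : ¬ (j * r / Nat.gcd j (j + k) + 1) ∣ j + k :=
    Nat.not_dvd_of_primeFactors_eq hsame hp (by omega) hpj
  rw [Nat.mul_div_gcd_add_one_add, Nat.totient_mul_prime_of_not_dvd hq hqj,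
    Nat.totient_mul_prime_of_not_dvd hp hpjk, Nat.add_sub_cancel, Nat.add_sub_cancel]
  rw [Nat.mul_div_right_comm (Nat.gcd_dvd_right j (j + k)),
    Nat.mul_div_right_comm (Nat.gcd_dvd_left j (j + k)), ← mul_assoc, ← mul_assoc,
    Nat.totient_mul_div_gcd_eq_of_primeFactors_eq hsame]

theorem stmt_2 (j k g r n : ℕ) (hj : 0 < j) (hk : 0 < k) (hr : 0 < r)
    (hg : g = Nat.gcd j (j + k))
    (hsame : j.primeFactors = (j + k).primeFactors)
    (hp : Nat.Prime (j * r / g + 1)) (hq : Nat.Prime ((j + k) * r / g + 1))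
    (hpj : ¬ (j * r / g + 1) ∣ j) (hqj : ¬ ((j + k) * r / g + 1) ∣ j)
    (hn : n = j * ((j + k) * r / g + 1)) :
    Nat.totient n = Nat.totient (n + k) :=
  stmt_2_general j k g r n hj hg hsame hp hq hpj hqj hn
end

section
/- Let a₁, b₁, a₂, b₂ be integers with a₁a₂(a₁b₂ - a₂b₁) ≠ 0, and let m₁, m₂, k₁, k₂, l be positive integers satisfying m₁ = k₂(a₁b₂ - a₂b₁)/(a₂(k₂ - k₁)), m₂ = k₁(a₁b₂ - a₂b₁)/(a₁(k₂ - k₁)), and k₁σ(m₁) = k₂σ(m₂). Suppose q₁ = k₁l - 1 and q₂ = k₂l - 1 are both primes, with qᵢ not dividing mᵢ for i = 1, 2. If n = (m₁q₁ - b₁)/a₁ is an integer, then a₁n + b₁ = m₁q₁, a₂n + b₂ = m₂q₂, and σ(a₁n + b₁) = σ(a₂n + b₂). -/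
/-!
Since `qᵢ ∤ mᵢ` and `σ` is multiplicative, `σ(mᵢ qᵢ) = σ(mᵢ) (qᵢ + 1) = kᵢ σ(mᵢ) l`, so the
equality of the two sums of divisors is `k₁ σ(m₁) = k₂ σ(m₂)` multiplied by `l`. The identity
`a₂ n + b₂ = m₂ q₂` is linear algebra: after multiplying by `a₁ (k₂ - k₁)`, which is nonzero, it
becomes a combination of the defining relations of `m₁`, `m₂` and `n`.
-/

open ArithmeticFunction
open scoped ArithmeticFunction.sigma

theorem Nat.Prime.sigma_one_eq {p : ℕ} (hp : p.Prime) : σ 1 p = p + 1 := by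
  simpa [Finset.sum_range_succ, add_comm] using sigma_one_apply_prime_pow (i := 1) hp

theorem sigma_one_mul_prime {m p : ℕ} (hp : p.Prime) (hpm : ¬ p ∣ m) :
    σ 1 (m * p) = σ 1 m * (p + 1) := by
  rw [isMultiplicative_sigma.map_mul_of_coprime (hp.coprime_iff_not_dvd.mpr hpm).symm,
    hp.sigma_one_eq]

theorem sigma_one_mul_prime_eq_of_mul_sigma_one_eq {m₁ m₂ k₁ k₂ l p₁ p₂ : ℕ}
    (hσ : k₁ * σ 1 m₁ = k₂ * σ 1 m₂) (hp₁ : p₁.Prime) (hp₂ : p₂.Prime)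
    (hp₁m : ¬ p₁ ∣ m₁) (hp₂m : ¬ p₂ ∣ m₂) (hk₁ : p₁ + 1 = k₁ * l) (hk₂ : p₂ + 1 = k₂ * l) :
    σ 1 (m₁ * p₁) = σ 1 (m₂ * p₂) := by
  rw [sigma_one_mul_prime hp₁ hp₁m, sigma_one_mul_prime hp₂ hp₂m, hk₁, hk₂]
  linear_combination l * hσ

theorem add_eq_mul_of_coefficient_relations {R : Type*} [CommRing R] [IsDomain R]
    {a₁ b₁ a₂ b₂ m₁ m₂ k₁ k₂ l q₁ q₂ n : R} (ha₁ : a₁ ≠ 0) (hk : k₂ - k₁ ≠ 0)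
    (hm₁ : m₁ * (a₂ * (k₂ - k₁)) = k₂ * (a₁ * b₂ - a₂ * b₁))
    (hm₂ : m₂ * (a₁ * (k₂ - k₁)) = k₁ * (a₁ * b₂ - a₂ * b₁))
    (hq₁ : q₁ = k₁ * l - 1) (hq₂ : q₂ = k₂ * l - 1) (hn : a₁ * n = m₁ * q₁ - b₁) :
    a₂ * n + b₂ = m₂ * q₂ := by
  refine mul_right_cancel₀ (mul_ne_zero ha₁ hk) ?_
  subst hq₁ hq₂
  linear_combination (a₂ * (k₂ - k₁)) * hn + (k₁ * l - 1) * hm₁ - (k₂ * l - 1) * hm₂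

theorem stmt_3_general (a₁ b₁ a₂ b₂ : ℤ) (h : a₁ * a₂ * (a₁ * b₂ - a₂ * b₁) ≠ 0)
    (m₁ m₂ k₁ k₂ l q₁ q₂ : ℕ)
    (hm₁ : (m₁ : ℤ) * (a₂ * ((k₂ : ℤ) - (k₁ : ℤ))) = (k₂ : ℤ) * (a₁ * b₂ - a₂ * b₁))
    (hm₂ : (m₂ : ℤ) * (a₁ * ((k₂ : ℤ) - (k₁ : ℤ))) = (k₁ : ℤ) * (a₁ * b₂ - a₂ * b₁))
    (hσ : k₁ * ArithmeticFunction.sigma 1 m₁ = k₂ * ArithmeticFunction.sigma 1 m₂)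
    (hq₁ : (q₁ : ℤ) = (k₁ : ℤ) * l - 1) (hq₂ : (q₂ : ℤ) = (k₂ : ℤ) * l - 1)
    (hq₁p : q₁.Prime) (hq₂p : q₂.Prime)
    (hq₁m : ¬ q₁ ∣ m₁) (hq₂m : ¬ q₂ ∣ m₂)
    (n : ℤ) (hn : a₁ * n = (m₁ : ℤ) * q₁ - b₁) :
    a₁ * n + b₁ = (m₁ : ℤ) * q₁ ∧ a₂ * n + b₂ = (m₂ : ℤ) * q₂ ∧
      ArithmeticFunction.sigma 1 (m₁ * q₁) = ArithmeticFunction.sigma 1 (m₂ * q₂) := by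
  have ha₁ : a₁ ≠ 0 := left_ne_zero_of_mul (left_ne_zero_of_mul h)
  have hD : a₁ * b₂ - a₂ * b₁ ≠ 0 := right_ne_zero_of_mul h
  have hk₁ : q₁ + 1 = k₁ * l := by zify; linarith
  have hk₂ : q₂ + 1 = k₂ * l := by zify; linarith
  have hk₂₀ : k₂ ≠ 0 := by
    rintro rfl
    simp at hk₂
  have hk : (k₂ : ℤ) - k₁ ≠ 0 := by
    intro hk
    rw [hk, mul_zero, mul_zero, eq_comm] at hm₁
    exact mul_ne_zero (Nat.cast_ne_zero.mpr hk₂₀) hD hm₁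
  exact ⟨by linarith, add_eq_mul_of_coefficient_relations ha₁ hk hm₁ hm₂ hq₁ hq₂ hn,
    sigma_one_mul_prime_eq_of_mul_sigma_one_eq hσ hq₁p hq₂p hq₁m hq₂m hk₁ hk₂⟩

theorem stmt_3 (a₁ b₁ a₂ b₂ : ℤ) (h : a₁ * a₂ * (a₁ * b₂ - a₂ * b₁) ≠ 0)
    (m₁ m₂ k₁ k₂ l q₁ q₂ : ℕ)
    (hm₁pos : 0 < m₁) (hm₂pos : 0 < m₂) (hk₁pos : 0 < k₁) (hk₂pos : 0 < k₂) (hl : 0 < l)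
    (hm₁ : (m₁ : ℤ) * (a₂ * ((k₂ : ℤ) - (k₁ : ℤ))) = (k₂ : ℤ) * (a₁ * b₂ - a₂ * b₁))
    (hm₂ : (m₂ : ℤ) * (a₁ * ((k₂ : ℤ) - (k₁ : ℤ))) = (k₁ : ℤ) * (a₁ * b₂ - a₂ * b₁))
    (hσ : k₁ * ArithmeticFunction.sigma 1 m₁ = k₂ * ArithmeticFunction.sigma 1 m₂)
    (hq₁ : (q₁ : ℤ) = (k₁ : ℤ) * l - 1) (hq₂ : (q₂ : ℤ) = (k₂ : ℤ) * l - 1)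
    (hq₁p : q₁.Prime) (hq₂p : q₂.Prime)
    (hq₁m : ¬ q₁ ∣ m₁) (hq₂m : ¬ q₂ ∣ m₂)
    (n : ℤ) (hn : a₁ * n = (m₁ : ℤ) * q₁ - b₁) :
    a₁ * n + b₁ = (m₁ : ℤ) * q₁ ∧ a₂ * n + b₂ = (m₂ : ℤ) * q₂ ∧
      ArithmeticFunction.sigma 1 (m₁ * q₁) = ArithmeticFunction.sigma 1 (m₂ * q₂) :=
  stmt_3_general a₁ b₁ a₂ b₂ h m₁ m₂ k₁ k₂ l q₁ q₂ hm₁ hm₂ hσ hq₁ hq₂ hq₁p hq₂p hq₁m hq₂m n hn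
end

section
/- Let a₁, b₁, a₂, b₂ be integers with a₁a₂(a₁b₂ - a₂b₁) ≠ 0, and let m₁, m₂, k₁, k₂, l be positive integers satisfying m₁ = k₂(a₁b₂ - a₂b₁)/(a₂(k₁ - k₂)), m₂ = k₁(a₁b₂ - a₂b₁)/(a₁(k₁ - k₂)), and k₁φ(m₁) = k₂φ(m₂). Suppose q₁ = k₁l + 1 and q₂ = k₂l + 1 are both primes, with qᵢ not dividing mᵢ for i = 1, 2. If n = (m₁q₁ - b₁)/a₁ is an integer, then a₁n + b₁ = m₁q₁, a₂n + b₂ = m₂q₂, and φ(a₁n + b₁) = φ(a₂n + b₂). -/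
/-!
Eliminating `n` between the two linear forms shows that `a₁ n + b₁ = m₁ q₁` forces
`a₂ n + b₂ = m₂ q₂`: with `D = a₁ b₂ - a₂ b₁`, the defining relations of `m₁, m₂` make
`a₁ (k₁ - k₂) (a₂ n + b₂ - m₂ q₂)` vanish identically. Since `qᵢ ∤ mᵢ`,
`φ (mᵢ qᵢ) = φ mᵢ · kᵢ l`, and `k₁ φ m₁ = k₂ φ m₂` makes the two values agree.
-/

open Nat in
theorem Nat.totient_mul_eq_of_prime_mul_add_one {m₁ m₂ k₁ k₂ l : ℕ}
    (hφ : k₁ * φ m₁ = k₂ * φ m₂) (hp₁ : (k₁ * l + 1).Prime) (hp₂ : (k₂ * l + 1).Prime)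
    (h₁ : ¬ k₁ * l + 1 ∣ m₁) (h₂ : ¬ k₂ * l + 1 ∣ m₂) :
    φ (m₁ * (k₁ * l + 1)) = φ (m₂ * (k₂ * l + 1)) := by
  rw [mul_comm m₁, mul_comm m₂, totient_mul_of_prime_of_not_dvd hp₁ h₁,
    totient_mul_of_prime_of_not_dvd hp₂ h₂, Nat.add_sub_cancel, Nat.add_sub_cancel,
    mul_right_comm, hφ, mul_right_comm]

theorem add_eq_mul_add_one_of_add_eq_mul_add_one {R : Type*} [CommRing R] [IsDomain R]
    {a₁ b₁ a₂ b₂ m₁ m₂ k₁ k₂ l n : R} (ha₁ : a₁ ≠ 0) (hk : k₁ ≠ k₂)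
    (hm₁ : m₁ * (a₂ * (k₁ - k₂)) = k₂ * (a₁ * b₂ - a₂ * b₁))
    (hm₂ : m₂ * (a₁ * (k₁ - k₂)) = k₁ * (a₁ * b₂ - a₂ * b₁))
    (hn : a₁ * n + b₁ = m₁ * (k₁ * l + 1)) :
    a₂ * n + b₂ = m₂ * (k₂ * l + 1) := by
  have key : a₁ * (k₁ - k₂) * (a₂ * n + b₂ - m₂ * (k₂ * l + 1)) = 0 := by
    linear_combination (k₁ - k₂) * a₂ * hn + (k₁ * l + 1) * hm₁ - (k₂ * l + 1) * hm₂
  have hne : a₁ * (k₁ - k₂) ≠ 0 := mul_ne_zero ha₁ (sub_ne_zero.mpr hk)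
  exact sub_eq_zero.mp ((mul_eq_zero.mp key).resolve_left hne)

theorem stmt_4_general (a₁ b₁ a₂ b₂ : ℤ) (h : a₁ * a₂ * (a₁ * b₂ - a₂ * b₁) ≠ 0)
    (m₁ m₂ k₁ k₂ l q₁ q₂ : ℕ)
    (hk₂pos : 0 < k₂)
    (hm₁ : (m₁ : ℤ) * (a₂ * ((k₁ : ℤ) - (k₂ : ℤ))) = (k₂ : ℤ) * (a₁ * b₂ - a₂ * b₁))
    (hm₂ : (m₂ : ℤ) * (a₁ * ((k₁ : ℤ) - (k₂ : ℤ))) = (k₁ : ℤ) * (a₁ * b₂ - a₂ * b₁))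
    (hφ : k₁ * Nat.totient m₁ = k₂ * Nat.totient m₂)
    (hq₁ : q₁ = k₁ * l + 1) (hq₂ : q₂ = k₂ * l + 1)
    (hq₁p : q₁.Prime) (hq₂p : q₂.Prime)
    (hq₁m : ¬ q₁ ∣ m₁) (hq₂m : ¬ q₂ ∣ m₂)
    (n : ℤ) (hn : a₁ * n = (m₁ : ℤ) * q₁ - b₁) :
    a₁ * n + b₁ = (m₁ : ℤ) * q₁ ∧ a₂ * n + b₂ = (m₂ : ℤ) * q₂ ∧
      Nat.totient (m₁ * q₁) = Nat.totient (m₂ * q₂) := by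
  have ha₁ : a₁ ≠ 0 := left_ne_zero_of_mul (left_ne_zero_of_mul h)
  have hD : a₁ * b₂ - a₂ * b₁ ≠ 0 := right_ne_zero_of_mul h
  have hk : (k₁ : ℤ) ≠ k₂ := by
    rintro hk
    rw [hk, sub_self, mul_zero, mul_zero, eq_comm, mul_eq_zero] at hm₁
    exact hD (hm₁.resolve_left (by positivity))
  have hn₁ : a₁ * n + b₁ = (m₁ : ℤ) * q₁ := by rw [hn, sub_add_cancel]
  subst hq₁ hq₂
  push_cast at hn₁ ⊢
  exact ⟨hn₁, add_eq_mul_add_one_of_add_eq_mul_add_one ha₁ hk hm₁ hm₂ hn₁,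
    Nat.totient_mul_eq_of_prime_mul_add_one hφ hq₁p hq₂p hq₁m hq₂m⟩

theorem stmt_4 (a₁ b₁ a₂ b₂ : ℤ) (h : a₁ * a₂ * (a₁ * b₂ - a₂ * b₁) ≠ 0)
    (m₁ m₂ k₁ k₂ l q₁ q₂ : ℕ)
    (hm₁pos : 0 < m₁) (hm₂pos : 0 < m₂) (hk₁pos : 0 < k₁) (hk₂pos : 0 < k₂) (hl : 0 < l)
    (hm₁ : (m₁ : ℤ) * (a₂ * ((k₁ : ℤ) - (k₂ : ℤ))) = (k₂ : ℤ) * (a₁ * b₂ - a₂ * b₁))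
    (hm₂ : (m₂ : ℤ) * (a₁ * ((k₁ : ℤ) - (k₂ : ℤ))) = (k₁ : ℤ) * (a₁ * b₂ - a₂ * b₁))
    (hφ : k₁ * Nat.totient m₁ = k₂ * Nat.totient m₂)
    (hq₁ : q₁ = k₁ * l + 1) (hq₂ : q₂ = k₂ * l + 1)
    (hq₁p : q₁.Prime) (hq₂p : q₂.Prime)
    (hq₁m : ¬ q₁ ∣ m₁) (hq₂m : ¬ q₂ ∣ m₂)
    (n : ℤ) (hn : a₁ * n = (m₁ : ℤ) * q₁ - b₁) :
    a₁ * n + b₁ = (m₁ : ℤ) * q₁ ∧ a₂ * n + b₂ = (m₂ : ℤ) * q₂ ∧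
      Nat.totient (m₁ * q₁) = Nat.totient (m₂ * q₂) :=
  stmt_4_general a₁ b₁ a₂ b₂ h m₁ m₂ k₁ k₂ l q₁ q₂ hk₂pos hm₁ hm₂ hφ hq₁ hq₂ hq₁p hq₂p hq₁m hq₂m n
    hn
end

section
/- Let k₁ < k₂ be coprime positive integers and m₁, m₂ positive integers with m₁ = k₂/(k₂ - k₁), m₂ = k₁/(k₂ - k₁), and k₁σ(m₁) = k₂σ(m₂). Then k₂ = k₁ + 1, m₁ = k₂, m₂ = k₁, k₁ divides σ(k₁), and k₁ + 1 divides σ(k₁ + 1). -/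
/- The difference `k₂ - k₁` divides both of the coprime numbers `k₁ = m₂ (k₂ - k₁)` and
`k₂ = m₁ (k₂ - k₁)`, so it is `1`. The hypothesis on `σ` then reads
`k₁ σ(k₁ + 1) = (k₁ + 1) σ(k₁)`, and coprimality of `k₁` and `k₁ + 1` gives both divisibilities. -/

theorem stmt_7_general (k₁ k₂ m₁ m₂ : ℕ)
    (hcop : Nat.Coprime k₁ k₂)
    (h1 : m₁ * (k₂ - k₁) = k₂) (h2 : m₂ * (k₂ - k₁) = k₁)
    (hσ : k₁ * ArithmeticFunction.sigma 1 m₁ = k₂ * ArithmeticFunction.sigma 1 m₂) :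
    k₂ = k₁ + 1 ∧ m₁ = k₂ ∧ m₂ = k₁ ∧
      k₁ ∣ ArithmeticFunction.sigma 1 k₁ ∧ (k₁ + 1) ∣ ArithmeticFunction.sigma 1 (k₁ + 1) := by
  have hd : k₂ - k₁ = 1 :=
    Nat.eq_one_of_dvd_coprimes hcop (Dvd.intro_left m₂ h2) (Dvd.intro_left m₁ h1)
  rw [hd, mul_one] at h1 h2
  obtain rfl : k₂ = k₁ + 1 := by omega
  subst m₁ m₂
  exact ⟨rfl, rfl, rfl, hcop.dvd_of_dvd_mul_left (Dvd.intro _ hσ),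
    hcop.symm.dvd_of_dvd_mul_left (Dvd.intro _ hσ.symm)⟩

theorem stmt_7 (k₁ k₂ m₁ m₂ : ℕ) (hk₁ : 0 < k₁) (hlt : k₁ < k₂)
    (hcop : Nat.Coprime k₁ k₂) (hm₁ : 0 < m₁) (hm₂ : 0 < m₂)
    (h1 : m₁ * (k₂ - k₁) = k₂) (h2 : m₂ * (k₂ - k₁) = k₁)
    (hσ : k₁ * ArithmeticFunction.sigma 1 m₁ = k₂ * ArithmeticFunction.sigma 1 m₂) :
    k₂ = k₁ + 1 ∧ m₁ = k₂ ∧ m₂ = k₁ ∧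
      k₁ ∣ ArithmeticFunction.sigma 1 k₁ ∧ (k₁ + 1) ∣ ArithmeticFunction.sigma 1 (k₁ + 1) :=
  stmt_7_general k₁ k₂ m₁ m₂ hcop h1 h2 hσ
end
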